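/- arXiv:2303.12834 — 2 statements merged into one kernel-verified Lean document; each statement's English description precedes it below -/
import Mathlib

section
/- Let $p_+, p_-$ be two probability distributions on a finite product space $\Omega_1 \times \Omega_2$ that factorize as $p_\pm(\omega_1,\omega_2) = p_\pm^1(\omega_1)\, p_\pm^{2|1}(\omega_2 \mid \omega_1)$. Then $1 - \mathrm{TV}(p_+, p_-) \geq (1 - \mathrm{TV}(p_+^1, p_-^1)) \cdot \min_{\omega_1} (1 - \mathrm{TV}(p_+^{2|1}(\cdot\mid\omega_1), p_-^{2|1}(\cdot\mid\omega_1)))$. -/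
open Finset

/-- `1 - ½ ∑|a-b| = ∑ min a b` for probability vectors. -/
lemma one_sub_half_abs_sum {Ω : Type*} [Fintype Ω] (a b : Ω → ℝ)
    (ha : ∑ ω, a ω = 1) (hb : ∑ ω, b ω = 1) :
    1 - (1 / 2) * ∑ ω, |a ω - b ω| = ∑ ω, min (a ω) (b ω) := by
  have h : ∀ ω, min (a ω) (b ω) = (a ω + b ω - |a ω - b ω|) / 2 := by
    intro ω
    rcases le_total (a ω) (b ω) with h | h <;>
      simp [min_eq_left, min_eq_right, h, abs_of_nonpos, abs_of_nonneg, sub_nonneg,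
        sub_nonpos] <;> ring
  simp only [h]
  rw [← Finset.sum_div, Finset.sum_sub_distrib, Finset.sum_add_distrib, ha, hb]
  ring

/-- For distributions on a product space factorized as marginal times conditional,
`1 - TV(p₊,p₋) ≥ (1 - TV(p₊¹,p₋¹)) * min_{ω₁} (1 - TV(p₊^{2|1}(·|ω₁), p₋^{2|1}(·|ω₁)))`. -/
theorem one_sub_tv_factorized_ge {Ω₁ Ω₂ : Type*} [Fintype Ω₁] [Fintype Ω₂] [Nonempty Ω₁]
    (p₁ q₁ : Ω₁ → ℝ) (p₂ q₂ : Ω₁ → Ω₂ → ℝ)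
    (hp₁0 : ∀ ω₁, 0 ≤ p₁ ω₁) (hq₁0 : ∀ ω₁, 0 ≤ q₁ ω₁)
    (hp₂0 : ∀ ω₁ ω₂, 0 ≤ p₂ ω₁ ω₂) (hq₂0 : ∀ ω₁ ω₂, 0 ≤ q₂ ω₁ ω₂)
    (hp₁1 : ∑ ω₁, p₁ ω₁ = 1) (hq₁1 : ∑ ω₁, q₁ ω₁ = 1)
    (hp₂1 : ∀ ω₁, ∑ ω₂, p₂ ω₁ ω₂ = 1) (hq₂1 : ∀ ω₁, ∑ ω₂, q₂ ω₁ ω₂ = 1) :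
    (1 - (1 / 2) * ∑ ω₁, |p₁ ω₁ - q₁ ω₁|) *
        (⨅ ω₁, (1 - (1 / 2) * ∑ ω₂, |p₂ ω₁ ω₂ - q₂ ω₁ ω₂|))
      ≤ 1 - (1 / 2) * ∑ ω₁, ∑ ω₂, |p₁ ω₁ * p₂ ω₁ ω₂ - q₁ ω₁ * q₂ ω₁ ω₂| := by
  have h1 : (1 : ℝ) - (1 / 2) * ∑ ω₁, |p₁ ω₁ - q₁ ω₁| = ∑ ω₁, min (p₁ ω₁) (q₁ ω₁) :=
    one_sub_half_abs_sum _ _ hp₁1 hq₁1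
  have h2 : ∀ ω₁, (1 : ℝ) - (1 / 2) * ∑ ω₂, |p₂ ω₁ ω₂ - q₂ ω₁ ω₂|
      = ∑ ω₂, min (p₂ ω₁ ω₂) (q₂ ω₁ ω₂) := fun ω₁ =>
    one_sub_half_abs_sum _ _ (hp₂1 ω₁) (hq₂1 ω₁)
  have hprod : (1 : ℝ) - (1 / 2) * ∑ ω₁, ∑ ω₂, |p₁ ω₁ * p₂ ω₁ ω₂ - q₁ ω₁ * q₂ ω₁ ω₂|
      = ∑ ω₁, ∑ ω₂, min (p₁ ω₁ * p₂ ω₁ ω₂) (q₁ ω₁ * q₂ ω₁ ω₂) := by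
    have := one_sub_half_abs_sum (Ω := Ω₁ × Ω₂)
      (fun ω => p₁ ω.1 * p₂ ω.1 ω.2) (fun ω => q₁ ω.1 * q₂ ω.1 ω.2)
      (by rw [Fintype.sum_prod_type]
          simp only [← Finset.mul_sum, hp₂1, mul_one, hp₁1])
      (by rw [Fintype.sum_prod_type]
          simp only [← Finset.mul_sum, hq₂1, mul_one, hq₁1])
    rw [Fintype.sum_prod_type, Fintype.sum_prod_type] at this
    simpa using this
  rw [h1, hprod]
  -- bounded below
  have hbdd : BddBelow (Set.range fun ω₁ => (1 : ℝ) - (1 / 2) * ∑ ω₂, |p₂ ω₁ ω₂ - q₂ ω₁ ω₂|) :=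
    Set.Finite.bddBelow (Set.finite_range _)
  rw [Finset.sum_mul]
  refine Finset.sum_le_sum fun ω₁ _ => ?_
  have hmin0 : 0 ≤ min (p₁ ω₁) (q₁ ω₁) := le_min (hp₁0 ω₁) (hq₁0 ω₁)
  calc min (p₁ ω₁) (q₁ ω₁) * (⨅ ω₁, (1 - (1 / 2) * ∑ ω₂, |p₂ ω₁ ω₂ - q₂ ω₁ ω₂|))
      ≤ min (p₁ ω₁) (q₁ ω₁) * (1 - (1 / 2) * ∑ ω₂, |p₂ ω₁ ω₂ - q₂ ω₁ ω₂|) :=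
        mul_le_mul_of_nonneg_left (ciInf_le hbdd ω₁) hmin0
    _ = ∑ ω₂, min (p₁ ω₁) (q₁ ω₁) * min (p₂ ω₁ ω₂) (q₂ ω₁ ω₂) := by
        rw [h2 ω₁, Finset.mul_sum]
    _ ≤ ∑ ω₂, min (p₁ ω₁ * p₂ ω₁ ω₂) (q₁ ω₁ * q₂ ω₁ ω₂) := by
        refine Finset.sum_le_sum fun ω₂ _ => le_min ?_ ?_
        · exact mul_le_mul (min_le_left _ _) (min_le_left _ _)
            (le_min (hp₂0 ω₁ ω₂) (hq₂0 ω₁ ω₂)) (hp₁0 ω₁)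
        · exact mul_le_mul (min_le_right _ _) (min_le_right _ _)
            (le_min (hp₂0 ω₁ ω₂) (hq₂0 ω₁ ω₂)) (hq₁0 ω₁)
end

section
/- Let $U_+$ and $U_-$ be $2^n$-dimensional unitaries satisfying $\mathrm{Tr}[U_+ U_-^\dagger] = 0$, and let $V$ be any $2^n$-dimensional unitary. If $\frac{1}{4^n}|\mathrm{Tr}[U_+ V^\dagger]|^2 \geq 3/4$, then $\frac{1}{4^n}|\mathrm{Tr}[U_- V^\dagger]|^2 \leq \sqrt{1 - (3/4)^2} < 0.67$, and in particular $\frac{1}{4^n}|\mathrm{Tr}[U_- V^\dagger]|^2 < \frac{1}{4^n}|\mathrm{Tr}[U_+ V^\dagger]|^2$. -/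
open Matrix

noncomputable section

/-- Embed a matrix into Euclidean space (Hilbert–Schmidt). -/
def matVec {N : ℕ} (A : Matrix (Fin N) (Fin N) ℂ) :
    EuclideanSpace ℂ (Fin N × Fin N) := WithLp.toLp 2 (fun p : Fin N × Fin N => A p.1 p.2)

lemma matVec_inner {N : ℕ} (A B : Matrix (Fin N) (Fin N) ℂ) :
    (inner ℂ (matVec A) (matVec B) : ℂ) = (B * A.conjTranspose).trace := by
  simp only [PiLp.inner_apply, RCLike.inner_apply', matVec, PiLp.toLp_apply, Matrix.trace,
    Matrix.diag, Matrix.mul_apply, Matrix.conjTranspose_apply, Fintype.sum_prod_type]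
  exact Finset.sum_congr rfl fun i _ => Finset.sum_congr rfl fun j _ => by
    rw [starRingEnd_apply, mul_comm]

lemma matVec_norm {N : ℕ} (A : Matrix (Fin N) (Fin N) ℂ)
    (hA : A * A.conjTranspose = 1) : ‖matVec A‖ = Real.sqrt N := by
  have h1 : (inner ℂ (matVec A) (matVec A) : ℂ) = (N : ℂ) := by
    rw [matVec_inner, hA, Matrix.trace_one]; simp
  have h2 : ((‖matVec A‖ : ℂ)) ^ 2 = (N : ℂ) := by
    rw [← h1]; exact (inner_self_eq_norm_sq_to_K (matVec A)).symm
  have h3 : ‖matVec A‖ ^ 2 = (N : ℝ) := by exact_mod_cast h2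
  rw [← h3, Real.sqrt_sq (norm_nonneg _)]

/-- If `Tr[U₊U₋†] = 0` and `V` has normalized squared overlap at least `3/4` with `U₊`,
then its overlap with `U₋` is at most `√(1-(3/4)²) < 0.67`, hence strictly smaller. -/
theorem overlap_distinguishing {n : ℕ}
    (Uplus Uminus V : Matrix (Fin (2 ^ n)) (Fin (2 ^ n)) ℂ)
    (hUp : Uplus * Uplus.conjTranspose = 1 ∧ Uplus.conjTranspose * Uplus = 1)
    (hUm : Uminus * Uminus.conjTranspose = 1 ∧ Uminus.conjTranspose * Uminus = 1)
    (hV : V * V.conjTranspose = 1 ∧ V.conjTranspose * V = 1)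
    (horth : (Uplus * Uminus.conjTranspose).trace = 0)
    (h : (3 : ℝ) / 4 ≤ (1 / 4 ^ n) * ‖(Uplus * V.conjTranspose).trace‖ ^ 2) :
    (1 / 4 ^ n) * ‖(Uminus * V.conjTranspose).trace‖ ^ 2
        ≤ Real.sqrt (1 - (3 / 4) ^ 2) ∧
      Real.sqrt (1 - (3 / 4) ^ 2) < 0.67 ∧
      (1 / 4 ^ n) * ‖(Uminus * V.conjTranspose).trace‖ ^ 2
        < (1 / 4 ^ n) * ‖(Uplus * V.conjTranspose).trace‖ ^ 2 := by
  have hNpos : (0 : ℝ) < (2 : ℝ) ^ n := by positivity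
  have hNcast : ((2 ^ n : ℕ) : ℝ) = (2 : ℝ) ^ n := by push_cast; ring
  have hsq : Real.sqrt ((2:ℝ)^n) ^ 2 = (2:ℝ)^n := Real.sq_sqrt hNpos.le
  have hsqpos : 0 < Real.sqrt ((2:ℝ)^n) := Real.sqrt_pos.mpr hNpos
  set c : ℝ := (Real.sqrt ((2:ℝ)^n))⁻¹ with hc
  have hcpos : 0 < c := by positivity
  have hc2 : c ^ 2 * (2:ℝ)^n = 1 := by
    rw [hc]; field_simp; exact hsq.symm
  set e : Fin 2 → EuclideanSpace ℂ (Fin (2^n) × Fin (2^n)) :=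
    ![(c : ℂ) • matVec Uplus, (c : ℂ) • matVec Uminus] with he
  have horth2 : (Uminus * Uplus.conjTranspose).trace = 0 := by
    have h' : (Uminus * Uplus.conjTranspose) = (Uplus * Uminus.conjTranspose).conjTranspose := by
      rw [Matrix.conjTranspose_mul, Matrix.conjTranspose_conjTranspose]
    rw [h', Matrix.trace_conjTranspose, horth, star_zero]
  have hself : ∀ (A : Matrix (Fin (2^n)) (Fin (2^n)) ℂ), A * A.conjTranspose = 1 →
      (inner ℂ ((c:ℂ) • matVec A) ((c:ℂ) • matVec A) : ℂ) = 1 := by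
    intro A hA
    rw [inner_smul_left, inner_smul_right, matVec_inner, hA, Matrix.trace_one]
    rw [Complex.conj_ofReal]
    rw [show ((c:ℂ) * ((c:ℂ) * ((Fintype.card (Fin (2^n)) : ℕ) : ℂ)))
        = ((c^2 * (2:ℝ)^n : ℝ) : ℂ) by
      simp [Fintype.card_fin]; push_cast; ring]
    rw [hc2]; norm_num
  have hzero : ∀ (A B : Matrix (Fin (2^n)) (Fin (2^n)) ℂ),
      (B * A.conjTranspose).trace = 0 →
      (inner ℂ ((c:ℂ) • matVec A) ((c:ℂ) • matVec B) : ℂ) = 0 := by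
    intro A B hAB
    rw [inner_smul_left, inner_smul_right, matVec_inner, hAB]; simp
  have hortho : Orthonormal ℂ e := by
    rw [orthonormal_iff_ite]
    intro i j
    fin_cases i <;> fin_cases j <;>
      simp only [he, Matrix.cons_val_zero, Matrix.cons_val_one, Matrix.head_cons,
        Fin.mk_zero, Fin.mk_one]
    · rw [if_true]; exact hself Uplus hUp.1
    · rw [if_neg (by decide)]; exact hzero Uplus Uminus horth2
    · rw [if_neg (by decide)]; exact hzero Uminus Uplus horth
    · rw [if_true]; exact hself Uminus hUm.1
  have hbessel := hortho.sum_inner_products_le (s := Finset.univ) (matVec V)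
  rw [Fin.sum_univ_two] at hbessel
  have hVnorm : ‖matVec V‖ ^ 2 = (2:ℝ)^n := by
    rw [matVec_norm V hV.1, hNcast, hsq]
  have habs : ∀ (A : Matrix (Fin (2^n)) (Fin (2^n)) ℂ),
      ‖(inner ℂ ((c:ℂ) • matVec A) (matVec V) : ℂ)‖
        = c * ‖(A * V.conjTranspose).trace‖ := by
    intro A
    rw [inner_smul_left, matVec_inner]
    have h' : (V * A.conjTranspose).trace = star ((A * V.conjTranspose).trace) := by
      rw [show V * A.conjTranspose = (A * V.conjTranspose).conjTranspose by
        rw [Matrix.conjTranspose_mul, Matrix.conjTranspose_conjTranspose]]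
      rw [Matrix.trace_conjTranspose]
    rw [h', norm_mul]
    simp [abs_of_pos hcpos]
  rw [he] at hbessel
  simp only [Matrix.cons_val_zero, Matrix.cons_val_one, Matrix.head_cons] at hbessel
  rw [habs Uplus, habs Uminus, hVnorm] at hbessel
  set a := ‖(Uplus * V.conjTranspose).trace‖ with ha
  set b := ‖(Uminus * V.conjTranspose).trace‖ with hb
  have h4 : (4:ℝ)^n = (2:ℝ)^n * (2:ℝ)^n := by
    rw [show (4:ℝ) = 2 * 2 by norm_num, mul_pow]
  have hkey : (1 / 4 ^ n) * a ^ 2 + (1 / 4 ^ n) * b ^ 2 ≤ 1 := by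
    have h1 : (c * a) ^ 2 + (c * b) ^ 2 ≤ (2:ℝ)^n := hbessel
    have h2 : c ^ 2 = 1 / (2:ℝ)^n := by
      rw [hc, inv_pow, hsq]; exact (one_div _).symm
    have e : ∀ x : ℝ, 1/((2:ℝ)^n*(2:ℝ)^n)*x^2 = (1/(2:ℝ)^n)*(c*x)^2 := by
      intro x; rw [mul_pow, h2]; field_simp
    rw [h4, e a, e b, ← mul_add]
    calc (1/(2:ℝ)^n)*((c*a)^2+(c*b)^2) ≤ (1/(2:ℝ)^n)*(2:ℝ)^n :=
          mul_le_mul_of_nonneg_left h1 (by positivity)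
      _ = 1 := by field_simp
  have hblt : (1 / 4 ^ n) * b ^ 2 ≤ 1 / 4 := by linarith
  have hs7 : Real.sqrt (1 - (3/4:ℝ)^2) = Real.sqrt (7/16) := by norm_num
  have hs7sq : Real.sqrt (7/16:ℝ) ^ 2 = 7/16 := Real.sq_sqrt (by norm_num)
  have hs7nn : 0 ≤ Real.sqrt (7/16:ℝ) := Real.sqrt_nonneg _
  refine ⟨?_, ?_, ?_⟩
  · rw [hs7]; nlinarith
  · rw [hs7]; nlinarith
  · linarith
end
end
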